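/- arXiv:2401.17426 — 2 statements merged into one kernel-verified Lean document; each statement's English description precedes it below -/
import Mathlib

section
/- Let d ≥ 1, let A be a d×d real matrix, b ∈ ℝ^d, and v ∈ ℝ. Let x_q ~ N(0, I_d) and θ ~ N(0, I_d/d) be independent random vectors in ℝ^d. Then E[(v·θᵀ(A + θbᵀ)x_q − θᵀx_q)²] = (1/d)·tr((vA − I_d)(vA − I_d)ᵀ) + v²·‖b‖²·(d+2)/d. In particular, this quantity (the leading, D-independent term of the single-head in-context-learning loss) vanishes exactly when vA = I_d and b = 0. -/
open MeasureTheory ProbabilityTheory Matrix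

noncomputable section

/-- The standard Gaussian measure `N(0, I_d)` on `ℝ^d` (i.i.d. standard normal coordinates). -/
def stdG (d : ℕ) : Measure (Fin d → ℝ) :=
  Measure.pi fun _ => gaussianReal 0 1

/-- The Gaussian measure `N(0, I_d / d)` on `ℝ^d` (i.i.d. centered normal coordinates with
variance `1/d`). -/
def thetaG (d : ℕ) : Measure (Fin d → ℝ) :=
  Measure.pi fun _ => gaussianReal 0 (d : NNReal)⁻¹

/-- Euclidean dot product on `ℝ^d`. -/
def dot {d : ℕ} (a b : Fin d → ℝ) : ℝ := ∑ j, a j * b j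

/-!
The residual `v θᵀ(A + θbᵀ)x − θᵀx` is linear in the query, `w(θ)ᵀx` with
`w(θ) = (vA − I)ᵀθ + v‖θ‖²b`, so averaging over the standard Gaussian `x` leaves `E‖w(θ)‖²`.
Expanding the square: `E‖(vA − I)ᵀθ‖² = tr((vA − I)(vA − I)ᵀ)/d`; the cross term
`‖θ‖² θᵀ(vA − I)b` is odd in `θ` and averages to zero; and, the coordinates of `θ` being
independent, `E‖θ‖⁴ = Var‖θ‖² + (E‖θ‖²)² = d · 2d⁻² + 1 = (d + 2)/d`, where the Gaussian fourth
moment `3σ⁴` is the fourth derivative at `0` of the moment generating function `exp (σ²t²/2)`.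
Both terms are nonnegative, so the sum vanishes only if `vA = I` (forcing `v ≠ 0`) and `b = 0`.
-/

open Real
open scoped NNReal

section GaussianReal

lemma hasDerivAt_mul_exp_half_mul_sq {p : ℝ → ℝ} {p' : ℝ} (v t : ℝ) (hp : HasDerivAt p p' t) :
    HasDerivAt (fun t ↦ p t * rexp (v * t ^ 2 / 2))
      ((p' + p t * (v * t)) * rexp (v * t ^ 2 / 2)) t := by
  have he : HasDerivAt (fun t ↦ rexp (v * t ^ 2 / 2)) (rexp (v * t ^ 2 / 2) * (v * t)) t :=
    (((hasDerivAt_pow 2 t).const_mul v).div_const 2).exp.congr_deriv (by push_cast; ring)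
  exact (hp.fun_mul he).congr_deriv (by ring)

lemma iteratedDeriv_four_exp_half_mul_sq (v : ℝ) :
    iteratedDeriv 4 (fun t ↦ rexp (v * t ^ 2 / 2)) 0 = 3 * v ^ 2 := by
  set E := fun t ↦ rexp (v * t ^ 2 / 2)
  have step : ∀ {p q : ℝ → ℝ} (p' : ℝ → ℝ), (∀ t, HasDerivAt p (p' t) t) →
      (∀ t, q t = p' t + p t * (v * t)) → deriv (fun t ↦ p t * E t) = fun t ↦ q t * E t :=
    fun p' hp hq ↦ funext fun t ↦ by
      rw [hq, (hasDerivAt_mul_exp_half_mul_sq v t (hp t)).deriv]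
  have h1 : deriv (fun t ↦ 1 * E t) = fun t ↦ (v * t) * E t :=
    step (fun _ ↦ 0) (fun t ↦ hasDerivAt_const t 1) fun t ↦ by ring
  have h2 : deriv (fun t ↦ (v * t) * E t) = fun t ↦ (v + v ^ 2 * t ^ 2) * E t :=
    step (fun _ ↦ v) (fun t ↦ ((hasDerivAt_id t).const_mul v).congr_deriv (mul_one v))
      fun t ↦ by ring
  have h3 : deriv (fun t ↦ (v + v ^ 2 * t ^ 2) * E t)
      = fun t ↦ (3 * v ^ 2 * t + v ^ 3 * t ^ 3) * E t :=
    step (fun t ↦ 2 * v ^ 2 * t)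
      (fun t ↦ (((hasDerivAt_pow 2 t).const_mul (v ^ 2)).const_add v).congr_deriv
        (by norm_num; ring))
      fun t ↦ by ring
  have h4 : deriv (fun t ↦ (3 * v ^ 2 * t + v ^ 3 * t ^ 3) * E t)
      = fun t ↦ (3 * v ^ 2 + 6 * v ^ 3 * t ^ 2 + v ^ 4 * t ^ 4) * E t :=
    step (fun t ↦ 3 * v ^ 2 + 3 * v ^ 3 * t ^ 2)
      (fun t ↦ (((hasDerivAt_id t).const_mul (3 * v ^ 2)).add
        ((hasDerivAt_pow 3 t).const_mul (v ^ 3))).congr_deriv (by norm_num; ring))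
      fun t ↦ by ring
  have hE : E = fun t ↦ 1 * E t := by simp
  rw [hE, iteratedDeriv_succ, iteratedDeriv_succ, iteratedDeriv_succ, iteratedDeriv_one,
    h1, h2, h3, h4]
  simp [E]

variable (v : ℝ≥0)

lemma integral_sq_gaussianReal : ∫ x, x ^ 2 ∂gaussianReal 0 v = v := by
  rw [← variance_of_integral_eq_zero measurable_id'.aemeasurable integral_id_gaussianReal,
    variance_fun_id_gaussianReal]

lemma integral_pow_four_gaussianReal : ∫ x, x ^ 4 ∂gaussianReal 0 v = 3 * (v : ℝ) ^ 2 := by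
  have h := iteratedDeriv_mgf_zero (X := fun x ↦ x) (μ := gaussianReal 0 v) (by simp) 4
  rw [mgf_fun_id_gaussianReal] at h
  simp only [zero_mul, zero_add] at h
  rw [iteratedDeriv_four_exp_half_mul_sq] at h
  simpa using h.symm

lemma memLp_sq_gaussianReal : MemLp (fun x ↦ x ^ 2) 2 (gaussianReal 0 v) := by
  refine (memLp_two_iff_integrable_sq (by fun_prop)).2 ?_
  simpa [← pow_mul, (by decide : Even 4).pow_abs] using
    (memLp_id_gaussianReal (μ := 0) (v := v) 4).integrable_norm_pow'

lemma variance_sq_gaussianReal : Var[fun x ↦ x ^ 2; gaussianReal 0 v] = 2 * (v : ℝ) ^ 2 := by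
  rw [variance_eq_sub (memLp_sq_gaussianReal v)]
  simp only [Pi.pow_apply, ← pow_mul, integral_pow_four_gaussianReal, integral_sq_gaussianReal]
  ring

instance isNegInvariant_gaussianReal : (gaussianReal 0 v).IsNegInvariant :=
  ⟨by simpa [Measure.neg] using gaussianReal_map_neg (μ := 0) (v := v)⟩

end GaussianReal

lemma vecMul_dotProduct_vecMul_self {ι κ : Type*} [Fintype ι] [Fintype κ] (M : Matrix ι κ ℝ)
    (x : ι → ℝ) :
    (x ᵥ* M) ⬝ᵥ (x ᵥ* M) = ∑ j, (Mᵀ j ⬝ᵥ x) ^ 2 := by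
  rw [← mulVec_transpose, dotProduct]
  simp only [sq]
  rfl

section GaussianPi

variable {ι : Type*} [Fintype ι] (s : ℝ≥0)

lemma memLp_eval_gaussianPi (i : ι) :
    MemLp (fun x : ι → ℝ ↦ x i) 2 (Measure.pi fun _ : ι ↦ gaussianReal 0 s) :=
  (memLp_id_gaussianReal 2).comp_measurePreserving (measurePreserving_eval _ i)

lemma memLp_dotProduct_gaussianPi (c : ι → ℝ) :
    MemLp (fun x : ι → ℝ ↦ c ⬝ᵥ x) 2 (Measure.pi fun _ : ι ↦ gaussianReal 0 s) :=
  memLp_finsetSum _ fun i _ ↦ (memLp_eval_gaussianPi s i).const_mul (c i)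

lemma memLp_dotProduct_self_gaussianPi :
    MemLp (fun x : ι → ℝ ↦ x ⬝ᵥ x) 2 (Measure.pi fun _ : ι ↦ gaussianReal 0 s) := by
  refine memLp_finsetSum _ fun i _ ↦ ?_
  simpa [sq, Function.comp_def] using
    (memLp_sq_gaussianReal s).comp_measurePreserving (measurePreserving_eval _ i)

lemma integral_dotProduct_gaussianPi (c : ι → ℝ) :
    ∫ x, c ⬝ᵥ x ∂(Measure.pi fun _ : ι ↦ gaussianReal 0 s) = 0 := by
  simp only [dotProduct]
  rw [integral_finsetSum _ fun i _ ↦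
    ((memLp_eval_gaussianPi s i).integrable one_le_two).const_mul _]
  simp [integral_const_mul, integral_eval]

lemma integral_dotProduct_sq_gaussianPi (c : ι → ℝ) :
    ∫ x, (c ⬝ᵥ x) ^ 2 ∂(Measure.pi fun _ : ι ↦ gaussianReal 0 s) = s * (c ⬝ᵥ c) := by
  rw [← variance_of_integral_eq_zero (memLp_dotProduct_gaussianPi s c).aemeasurable
    (integral_dotProduct_gaussianPi s c)]
  have hsum : (fun x : ι → ℝ ↦ c ⬝ᵥ x) = ∑ i, fun x ↦ c i * x i := by
    ext x; simp [dotProduct]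
  rw [hsum, variance_sum_pi (X := fun i t ↦ c i * t)
    fun i ↦ (memLp_id_gaussianReal 2).const_mul (c i)]
  simp_rw [variance_const_mul _ (fun t ↦ t), variance_fun_id_gaussianReal]
  simp [dotProduct, Finset.mul_sum, sq, mul_comm]

lemma integral_dotProduct_self_gaussianPi :
    ∫ x, x ⬝ᵥ x ∂(Measure.pi fun _ : ι ↦ gaussianReal 0 s) = Fintype.card ι * s := by
  simp only [dotProduct, ← sq]
  rw [integral_finsetSum _ fun i _ ↦
    integrable_comp_eval (i := i) ((memLp_sq_gaussianReal s).integrable one_le_two)]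
  simp [integral_comp_eval (μ := fun _ : ι ↦ gaussianReal 0 s) (f := fun t ↦ t ^ 2) (by fun_prop),
    integral_sq_gaussianReal]

lemma integral_dotProduct_self_sq_gaussianPi :
    ∫ x, (x ⬝ᵥ x) ^ 2 ∂(Measure.pi fun _ : ι ↦ gaussianReal 0 s)
      = Fintype.card ι * (Fintype.card ι + 2) * (s : ℝ) ^ 2 := by
  have hvar := variance_eq_sub (memLp_dotProduct_self_gaussianPi (ι := ι) s)
  have hsum : (fun x : ι → ℝ ↦ x ⬝ᵥ x) = ∑ i, fun x ↦ x i ^ 2 := by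
    ext x; simp [dotProduct, sq]
  rw [hsum, variance_sum_pi (μ := fun _ : ι ↦ gaussianReal 0 s) (X := fun _ t ↦ t ^ 2)
    fun _ ↦ memLp_sq_gaussianReal s, ← hsum, integral_dotProduct_self_gaussianPi] at hvar
  simp only [variance_sq_gaussianReal, Finset.sum_const, Finset.card_univ, nsmul_eq_mul,
    Pi.pow_apply] at hvar
  linear_combination -hvar

lemma integrable_dotProduct_self_mul_dotProduct_gaussianPi (w : ι → ℝ) :
    Integrable (fun x ↦ (x ⬝ᵥ x) * (w ⬝ᵥ x)) (Measure.pi fun _ : ι ↦ gaussianReal 0 s) :=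
  (memLp_dotProduct_self_gaussianPi s).integrable_mul (memLp_dotProduct_gaussianPi s w)

lemma integral_dotProduct_self_mul_dotProduct_gaussianPi (w : ι → ℝ) :
    ∫ x, (x ⬝ᵥ x) * (w ⬝ᵥ x) ∂(Measure.pi fun _ : ι ↦ gaussianReal 0 s) = 0 := by
  have h := integral_neg_eq_self (fun x ↦ (x ⬝ᵥ x) * (w ⬝ᵥ x))
    (Measure.pi fun _ : ι ↦ gaussianReal 0 s)
  simp only [neg_dotProduct, dotProduct_neg, neg_neg, mul_neg, integral_neg] at h
  linarith

lemma integrable_vecMul_dotProduct_self_gaussianPi {κ : Type*} [Fintype κ] (M : Matrix ι κ ℝ) :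
    Integrable (fun x ↦ (x ᵥ* M) ⬝ᵥ (x ᵥ* M)) (Measure.pi fun _ : ι ↦ gaussianReal 0 s) := by
  simp only [vecMul_dotProduct_vecMul_self]
  exact integrable_finsetSum _ fun j _ ↦ (memLp_dotProduct_gaussianPi s (Mᵀ j)).integrable_sq

lemma integral_vecMul_dotProduct_self_gaussianPi {κ : Type*} [Fintype κ] (M : Matrix ι κ ℝ) :
    ∫ x, (x ᵥ* M) ⬝ᵥ (x ᵥ* M) ∂(Measure.pi fun _ : ι ↦ gaussianReal 0 s)
      = s * (M * Mᵀ).trace := by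
  simp only [vecMul_dotProduct_vecMul_self]
  rw [integral_finsetSum _ fun j _ ↦ (memLp_dotProduct_gaussianPi s (Mᵀ j)).integrable_sq,
    trace_mul_comm]
  simp only [integral_dotProduct_sq_gaussianPi, ← Finset.mul_sum]
  rfl

lemma integral_prod_dotProduct_sq_gaussianPi {Θ : Type*} [MeasurableSpace Θ] {ν : Measure Θ}
    [SFinite ν] {c : Θ → ι → ℝ} (hc : Measurable c) (hint : Integrable (fun θ ↦ c θ ⬝ᵥ c θ) ν) :
    ∫ p, (c p.2 ⬝ᵥ p.1) ^ 2 ∂(Measure.pi fun _ : ι ↦ gaussianReal 0 s).prod ν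
      = s * ∫ θ, c θ ⬝ᵥ c θ ∂ν := by
  have hprod : Integrable (fun p : (ι → ℝ) × Θ ↦ (c p.2 ⬝ᵥ p.1) ^ 2)
      ((Measure.pi fun _ : ι ↦ gaussianReal 0 s).prod ν) := by
    rw [integrable_prod_iff' (by fun_prop)]
    refine ⟨ae_of_all _ fun θ ↦ (memLp_dotProduct_gaussianPi s (c θ)).integrable_sq, ?_⟩
    simpa [integral_dotProduct_sq_gaussianPi] using hint.const_mul s
  rw [integral_prod_symm _ hprod, ← integral_const_mul]
  simp [integral_dotProduct_sq_gaussianPi]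

end GaussianPi

section ResidualWeight

variable {ι κ : Type*} [Fintype ι] [Fintype κ] (M : Matrix ι κ ℝ) (b : κ → ℝ) (a : ℝ)

def residualWeight (θ : ι → ℝ) : κ → ℝ := θ ᵥ* M + (a * (θ ⬝ᵥ θ)) • b

lemma residualWeight_dotProduct_self (θ : ι → ℝ) :
    residualWeight M b a θ ⬝ᵥ residualWeight M b a θ
      = (θ ᵥ* M) ⬝ᵥ (θ ᵥ* M) + 2 * a * ((θ ⬝ᵥ θ) * (M *ᵥ b ⬝ᵥ θ))
        + a ^ 2 * (b ⬝ᵥ b) * (θ ⬝ᵥ θ) ^ 2 := by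
  simp only [residualWeight, add_dotProduct, dotProduct_add, smul_dotProduct, dotProduct_smul,
    dotProduct_mulVec, dotProduct_comm (M *ᵥ b) θ, dotProduct_comm b (θ ᵥ* M), smul_eq_mul]
  ring

lemma measurable_residualWeight : Measurable (residualWeight M b a) := by
  unfold residualWeight
  fun_prop

variable (s : ℝ≥0)

lemma integrable_residualWeight_dotProduct_self_gaussianPi :
    Integrable (fun θ ↦ residualWeight M b a θ ⬝ᵥ residualWeight M b a θ)
      (Measure.pi fun _ : ι ↦ gaussianReal 0 s) := by
  simp only [residualWeight_dotProduct_self]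
  exact ((integrable_vecMul_dotProduct_self_gaussianPi s M).fun_add
    ((integrable_dotProduct_self_mul_dotProduct_gaussianPi s (M *ᵥ b)).const_mul _)).fun_add
    ((memLp_dotProduct_self_gaussianPi s).integrable_sq.const_mul _)

lemma integral_residualWeight_dotProduct_self_gaussianPi :
    ∫ θ, residualWeight M b a θ ⬝ᵥ residualWeight M b a θ
        ∂(Measure.pi fun _ : ι ↦ gaussianReal 0 s)
      = s * (M * Mᵀ).trace
        + a ^ 2 * (b ⬝ᵥ b) * (Fintype.card ι * (Fintype.card ι + 2) * s ^ 2) := by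
  have h₁ := integrable_vecMul_dotProduct_self_gaussianPi s M
  have h₂ := (integrable_dotProduct_self_mul_dotProduct_gaussianPi s (M *ᵥ b)).const_mul (2 * a)
  have h₃ := (memLp_dotProduct_self_gaussianPi (ι := ι) s).integrable_sq.const_mul
    (a ^ 2 * (b ⬝ᵥ b))
  simp only [residualWeight_dotProduct_self]
  rw [integral_add (h₁.fun_add h₂) h₃, integral_add h₁ h₂, integral_const_mul, integral_const_mul,
    integral_vecMul_dotProduct_self_gaussianPi, integral_dotProduct_self_mul_dotProduct_gaussianPi,
    integral_dotProduct_self_sq_gaussianPi]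
  ring

end ResidualWeight

lemma dot_eq_dotProduct {d : ℕ} (a b : Fin d → ℝ) : dot a b = a ⬝ᵥ b := rfl

lemma smul_dotProduct_mulVec_sub_dotProduct_eq_residualWeight {ι : Type*} [Fintype ι]
    [DecidableEq ι] (A : Matrix ι ι ℝ) (b : ι → ℝ) (v : ℝ) (x θ : ι → ℝ) :
    v * (θ ⬝ᵥ (A + vecMulVec θ b) *ᵥ x) - θ ⬝ᵥ x = residualWeight (v • A - 1) b v θ ⬝ᵥ x := by
  simp only [residualWeight, add_mulVec, dotProduct_add, vecMulVec_mulVec, dotProduct_mulVec,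
    vecMul_sub, vecMul_smul, vecMul_one, add_dotProduct, sub_dotProduct, smul_dotProduct,
    op_smul_eq_smul, dotProduct_smul, smul_eq_mul]
  ring

lemma mul_trace_add_mul_dotProduct_self_eq_zero_iff {ι κ : Type*} [Fintype ι] [DecidableEq ι]
    [Nonempty ι] [Fintype κ] (A : Matrix ι ι ℝ) (b : κ → ℝ) (v : ℝ) {α β : ℝ} (hα : 0 < α)
    (hβ : 0 < β) :
    α * ((v • A - 1) * (v • A - 1)ᵀ).trace + v ^ 2 * (b ⬝ᵥ b) * β = 0 ↔ v • A = 1 ∧ b = 0 := by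
  have htr : 0 ≤ ((v • A - 1) * (v • A - 1)ᵀ).trace := by
    rw [← conjTranspose_eq_transpose_of_trivial]
    exact (posSemidef_self_mul_conjTranspose (v • A - 1)).trace_nonneg
  have hb : 0 ≤ b ⬝ᵥ b := Finset.sum_nonneg fun j _ ↦ mul_self_nonneg (b j)
  constructor
  · intro h
    have htr0 : ((v • A - 1) * (v • A - 1)ᵀ).trace = 0 := by
      nlinarith [mul_nonneg (mul_nonneg (sq_nonneg v) hb) hβ.le]
    have hvA : v • A = 1 := by
      rw [← conjTranspose_eq_transpose_of_trivial, trace_mul_conjTranspose_self_eq_zero_iff] at htr0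
      exact sub_eq_zero.1 htr0
    have hv : v ≠ 0 := by
      rintro rfl
      simp at hvA
    have hb0 : b ⬝ᵥ b = 0 := by
      rw [htr0, mul_zero, zero_add] at h
      simpa [hv, hβ.ne'] using h
    exact ⟨hvA, dotProduct_self_eq_zero.1 hb0⟩
  · rintro ⟨hvA, rfl⟩
    simp [hvA]

/-- The leading (D-independent) term of the single-head ICL loss equals
`(1/d)·tr((vA−I)(vA−I)ᵀ) + v²‖b‖²(d+2)/d`, and it vanishes exactly when `vA = I` and `b = 0`. -/
theorem single_head_leading_term (d : ℕ) (hd : 1 ≤ d)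
    (A : Matrix (Fin d) (Fin d) ℝ) (b : Fin d → ℝ) (v : ℝ) :
    (∫ p : (Fin d → ℝ) × (Fin d → ℝ),
        (v * dot p.2 ((A + vecMulVec p.2 b).mulVec p.1) - dot p.2 p.1) ^ 2
        ∂((stdG d).prod (thetaG d)))
      = (1 / (d : ℝ)) * ((v • A - 1) * (v • A - 1)ᵀ).trace
        + v ^ 2 * (∑ j, b j ^ 2) * (((d : ℝ) + 2) / d) ∧
    ((1 / (d : ℝ)) * ((v • A - 1) * (v • A - 1)ᵀ).trace
        + v ^ 2 * (∑ j, b j ^ 2) * (((d : ℝ) + 2) / d) = 0 ↔ v • A = 1 ∧ b = 0) := by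
  have : Nonempty (Fin d) := ⟨⟨0, hd⟩⟩
  have hb : ∑ j, b j ^ 2 = b ⬝ᵥ b := by simp [dotProduct, sq]
  simp_rw [dot_eq_dotProduct, smul_dotProduct_mulVec_sub_dotProduct_eq_residualWeight, hb]
  rw [stdG, thetaG, integral_prod_dotProduct_sq_gaussianPi 1 (measurable_residualWeight _ _ _)
    (integrable_residualWeight_dotProduct_self_gaussianPi _ _ _ _), NNReal.coe_one, one_mul,
    integral_residualWeight_dotProduct_self_gaussianPi]
  refine ⟨?_, mul_trace_add_mul_dotProduct_self_eq_zero_iff A b v (by positivity) (by positivity)⟩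
  have hd₀ : (d : ℝ) ≠ 0 := by positivity
  simp only [Fintype.card_fin, NNReal.coe_inv, NNReal.coe_natCast]
  field_simp

end
end

section
/- Fix d ≥ 1 and v ∈ ℝ with v² > 2, and let g be the limiting two-head loss function. Then there exists c ∈ (0, 1) with v² > max{2c², 2(2c−1)²} such that g(c) < g(1) = v²·(v²/(v²−2))^{d/2} + (v²/(v²−2))^{d/2+1}; that is, the limiting two-head loss can be made strictly smaller than the limiting single-head loss, so c = 1 (which reduces the two-head attention to single-head attention) is not the optimal choice. -/
noncomputable section

/-!
Take `c = 1/2`, where the cross terms vanish: with `A = v²/(v²-2)` and `B = v²/(v²-1/2)`,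
`g(1/2) = 4v²(B^{d/2} - 1) + v² + B^{d/2+1}` and `g(1) = v² A^{d/2} + A^{d/2+1}`.
Since `1/B = 3/4 · 1 + 1/4 · (1/A)`, convexity of `x ↦ x^{-d/2}` on `(0, ∞)` gives
`4 B^{d/2} ≤ 3 + A^{d/2}`, and `B < A` handles the remaining term.
-/

/-- The limiting (after multiplying by `D`) two-head in-context-learning loss `g(c)`, for
`v² > max{2c², 2(2c−1)²}`. -/
def twoHeadLimit (d : ℕ) (v c : ℝ) : ℝ :=
  4 * v ^ 2 * ((v ^ 2 / (v ^ 2 - 2 * c ^ 2)) ^ ((d : ℝ) / 2)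
      - (v ^ 2 / (v ^ 2 - 2 * c * (2 * c - 1))) ^ ((d : ℝ) / 2))
    + v ^ 2 * (v ^ 2 / (v ^ 2 - 2 * (2 * c - 1) ^ 2)) ^ ((d : ℝ) / 2)
    + (2 * c - 1) ^ 2 * (v ^ 2 / (v ^ 2 - 2 * (2 * c - 1) ^ 2)) ^ ((d : ℝ) / 2 + 1)
    + 4 * c ^ 2 * (v ^ 2 / (v ^ 2 - 2 * c ^ 2)) ^ ((d : ℝ) / 2 + 1)
    - 4 * c * (2 * c - 1) * (v ^ 2 / (v ^ 2 - 2 * c * (2 * c - 1))) ^ ((d : ℝ) / 2 + 1)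

open Real Set

lemma convexOn_rpow_of_nonpos {p : ℝ} (hp : p ≤ 0) : ConvexOn ℝ (Ioi 0) fun x : ℝ ↦ x ^ p := by
  have hlog : ConvexOn ℝ (Ioi 0) fun x ↦ p * log x := by
    simpa [neg_mul_neg] using strictConcaveOn_log_Ioi.concaveOn.neg.smul (neg_nonneg.2 hp)
  refine ⟨convex_Ioi 0, fun x hx y hy a b ha hb hab ↦ ?_⟩
  have hxy : 0 < a * x + b * y := convex_Ioi 0 hx hy ha hb hab
  simp only [smul_eq_mul, rpow_def_of_pos hx, rpow_def_of_pos hy, rpow_def_of_pos hxy]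
  calc exp (log (a * x + b * y) * p) ≤ exp (a * (p * log x) + b * (p * log y)) := by
        simpa [mul_comm] using exp_le_exp.2 (hlog.2 hx hy ha hb hab)
    _ ≤ a * exp (log x * p) + b * exp (log y * p) := by
        simpa [mul_comm] using convexOn_exp.2 (mem_univ (p * log x)) (mem_univ (p * log y)) ha hb hab

lemma rpow_div_sub_eq_rpow_neg {w x : ℝ} (hw : 0 < w) (hx : x < w) (s : ℝ) :
    (w / (w - x)) ^ s = ((w - x) / w) ^ (-s) := by
  have : 0 ≤ (w - x) / w := div_nonneg (by linarith) hw.le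
  rw [← inv_div, inv_rpow this, rpow_neg this]

lemma four_mul_rpow_div_sub_half_le {s w : ℝ} (hs : 0 ≤ s) (hw : 2 < w) :
    4 * (w / (w - 1 / 2)) ^ s ≤ 3 + (w / (w - 2)) ^ s := by
  have hw0 : 0 < w := by linarith
  have hpt : 3 / 4 * 1 + 1 / 4 * ((w - 2) / w) = (w - 1 / 2) / w := by
    field_simp; ring
  have hconv := (convexOn_rpow_of_nonpos (neg_nonpos.2 hs)).2 (mem_Ioi.2 one_pos)
    (mem_Ioi.2 (div_pos (sub_pos.2 hw) hw0)) (show (0 : ℝ) ≤ 3 / 4 by norm_num)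
    (show (0 : ℝ) ≤ 1 / 4 by norm_num) (by norm_num)
  simp only [smul_eq_mul, hpt, one_rpow] at hconv
  rw [rpow_div_sub_eq_rpow_neg hw0 (by linarith), rpow_div_sub_eq_rpow_neg hw0 (by linarith)]
  linarith

lemma twoHeadLimit_one (d : ℕ) (v : ℝ) :
    twoHeadLimit d v 1 = v ^ 2 * (v ^ 2 / (v ^ 2 - 2)) ^ ((d : ℝ) / 2)
      + (v ^ 2 / (v ^ 2 - 2)) ^ ((d : ℝ) / 2 + 1) := by
  norm_num [twoHeadLimit]

lemma twoHeadLimit_half (d : ℕ) {v : ℝ} (hv : v ≠ 0) :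
    twoHeadLimit d v (1 / 2) = 4 * v ^ 2 * ((v ^ 2 / (v ^ 2 - 1 / 2)) ^ ((d : ℝ) / 2) - 1)
      + v ^ 2 + (v ^ 2 / (v ^ 2 - 1 / 2)) ^ ((d : ℝ) / 2 + 1) := by
  norm_num [twoHeadLimit, hv]

theorem twoHeadLimit_beats_single_head_general (d : ℕ) (v : ℝ) (hv : 2 < v ^ 2) :
    ∃ c : ℝ, 0 < c ∧ c < 1 ∧
      max (2 * c ^ 2) (2 * (2 * c - 1) ^ 2) < v ^ 2 ∧
      twoHeadLimit d v c < twoHeadLimit d v 1 ∧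
      twoHeadLimit d v 1
        = v ^ 2 * (v ^ 2 / (v ^ 2 - 2)) ^ ((d : ℝ) / 2)
          + (v ^ 2 / (v ^ 2 - 2)) ^ ((d : ℝ) / 2 + 1) := by
  refine ⟨1 / 2, by norm_num, by norm_num, by norm_num; linarith, ?_, twoHeadLimit_one d v⟩
  have hv0 : v ≠ 0 := by rintro rfl; norm_num at hv
  have hs : 0 ≤ (d : ℝ) / 2 := by positivity
  have hconv := mul_le_mul_of_nonneg_left (four_mul_rpow_div_sub_half_le hs hv) (sq_nonneg v)
  have hmono : (v ^ 2 / (v ^ 2 - 1 / 2)) ^ ((d : ℝ) / 2 + 1)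
      < (v ^ 2 / (v ^ 2 - 2)) ^ ((d : ℝ) / 2 + 1) :=
    rpow_lt_rpow (div_nonneg (sq_nonneg v) (by linarith))
      (div_lt_div_of_pos_left (by linarith) (by linarith) (by linarith)) (by positivity)
  rw [twoHeadLimit_half d hv0, twoHeadLimit_one]
  linarith

/-- There is some `c ∈ (0,1)` (with `v² > max{2c², 2(2c−1)²}`) at which the limiting two-head
loss is strictly smaller than its value at `c = 1`, which equals the limiting single-head loss:
multi-head attention strictly beats single-head attention. -/
theorem twoHeadLimit_beats_single_head (d : ℕ) (hd : 1 ≤ d) (v : ℝ) (hv : 2 < v ^ 2) :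
    ∃ c : ℝ, 0 < c ∧ c < 1 ∧
      max (2 * c ^ 2) (2 * (2 * c - 1) ^ 2) < v ^ 2 ∧
      twoHeadLimit d v c < twoHeadLimit d v 1 ∧
      twoHeadLimit d v 1
        = v ^ 2 * (v ^ 2 / (v ^ 2 - 2)) ^ ((d : ℝ) / 2)
          + (v ^ 2 / (v ^ 2 - 2)) ^ ((d : ℝ) / 2 + 1) :=
  twoHeadLimit_beats_single_head_general d v hv

end
end
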